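/- Let K be an algebraically closed field and let φ : K[x₁,x₂,x₃,y₁,y₂,y₃] → K[u₁,u₂,u₃] be the K-algebra homomorphism with φ(x₁) = u₁⁶, φ(x₂) = u₂⁶, φ(x₃) = u₃⁶, φ(y₁) = u₁u₃, φ(y₂) = u₂u₃, φ(y₃) = u₁⁴u₂⁴u₃². Then the zero set in K⁶ of ker φ equals the set of common zeros of the four binomials F₁ = y₁⁶ − x₁x₃, F₂ = y₂⁶ − x₂x₃, F_{3,2} = y₃² − x₁x₂y₁²y₂², and F_{3,3} = y₃³ − x₁²x₂²x₃. -/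

import Mathlib

/-!
Each binomial is sent to `0` by `φ`, which gives one inclusion. Conversely, over an algebraically
closed field every common zero of the binomials is the image of some `u ∈ K³` under the monomial
map `u ↦ (u₁⁶, u₂⁶, u₃⁶, u₁u₃, u₂u₃, u₁⁴u₂⁴u₃²)`, and such points kill `ker φ`. The crux is the
relation `y₃x₃ = y₁⁴y₂⁴`: both sides have equal squares (by `F₁, F₂, F_{3,2}`) and equal cubes
(by `F₁, F₂, F_{3,3}`).
-/

open MvPolynomial

theorem eq_of_pow_two_eq_of_pow_three_eq {M : Type*} [CommMonoidWithZero M] [IsCancelMulZero M]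
    {x y : M} (h2 : x ^ 2 = y ^ 2) (h3 : x ^ 3 = y ^ 3) : x = y := by
  rcases eq_or_ne y 0 with rfl | hy
  · simpa using h2
  · refine mul_right_cancel₀ (pow_ne_zero 2 hy) ?_
    calc x * y ^ 2 = x ^ 3 := by rw [← h2, ← pow_succ']
      _ = y * y ^ 2 := by rw [h3, pow_succ']

theorem eval_eq_zero_of_mem_ker {K σ τ : Type*} [CommRing K]
    (φ : MvPolynomial σ K →ₐ[K] MvPolynomial τ K) {a : σ → K} (u : τ → K)
    (hu : ∀ i, eval u (φ (X i)) = a i) {F : MvPolynomial σ K} (hF : F ∈ RingHom.ker φ) :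
    eval a F = 0 := by
  have hcomp : (aeval u).comp φ = aeval a :=
    algHom_ext fun i ↦ by simpa [coe_aeval_eq_eval] using hu i
  rw [← coe_aeval_eq_eval, ← hcomp]
  simp [RingHom.mem_ker.mp hF]

theorem mul_eq_of_binomials {R : Type*} [CommRing R] [IsDomain R] {x₁ x₂ x₃ y₁ y₂ y₃ : R}
    (h₁ : y₁ ^ 6 = x₁ * x₃) (h₂ : y₂ ^ 6 = x₂ * x₃)
    (h₃ : y₃ ^ 2 = x₁ * x₂ * y₁ ^ 2 * y₂ ^ 2) (h₄ : y₃ ^ 3 = x₁ ^ 2 * x₂ ^ 2 * x₃) :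
    y₃ * x₃ = y₁ ^ 4 * y₂ ^ 4 := by
  apply eq_of_pow_two_eq_of_pow_three_eq
  · linear_combination x₃ ^ 2 * h₃ - y₁ ^ 2 * y₂ ^ 8 * h₁ - x₁ * x₃ * y₁ ^ 2 * y₂ ^ 2 * h₂
  · linear_combination x₃ ^ 3 * h₄ - (y₁ ^ 6 + x₁ * x₃) * y₂ ^ 12 * h₁ -
      x₁ ^ 2 * x₃ ^ 2 * (y₂ ^ 6 + x₂ * x₃) * h₂

/-- Off the hyperplane `x₃ = 0` the parameters are `u₃ = x₃^(1/6)`, `uᵢ = yᵢ / u₃`; on it,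
`y₁ = y₂ = y₃ = 0` and `u = (x₁^(1/6), x₂^(1/6), 0)`. -/
theorem exists_param_of_binomials {K : Type*} [Field K] [IsAlgClosed K]
    {x₁ x₂ x₃ y₁ y₂ y₃ : K} (h₁ : y₁ ^ 6 = x₁ * x₃) (h₂ : y₂ ^ 6 = x₂ * x₃)
    (h₃ : y₃ ^ 2 = x₁ * x₂ * y₁ ^ 2 * y₂ ^ 2) (h₄ : y₃ ^ 3 = x₁ ^ 2 * x₂ ^ 2 * x₃) :
    ∃ u₁ u₂ u₃ : K, u₁ ^ 6 = x₁ ∧ u₂ ^ 6 = x₂ ∧ u₃ ^ 6 = x₃ ∧ u₁ * u₃ = y₁ ∧ u₂ * u₃ = y₂ ∧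
      u₁ ^ 4 * u₂ ^ 4 * u₃ ^ 2 = y₃ := by
  rcases eq_or_ne x₃ 0 with rfl | hx₃
  · obtain ⟨r₁, hr₁⟩ := IsAlgClosed.exists_pow_nat_eq x₁ (n := 6) (by norm_num)
    obtain ⟨r₂, hr₂⟩ := IsAlgClosed.exists_pow_nat_eq x₂ (n := 6) (by norm_num)
    have hy₁ : y₁ = 0 := by simpa using h₁
    have hy₂ : y₂ = 0 := by simpa using h₂
    have hy₃ : y₃ = 0 := by simpa [hy₁] using h₃
    exact ⟨r₁, r₂, 0, hr₁, hr₂, by simp, by simp [hy₁], by simp [hy₂], by simp [hy₃]⟩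
  · obtain ⟨u₃, hu₃⟩ := IsAlgClosed.exists_pow_nat_eq x₃ (n := 6) (by norm_num)
    have hu₃0 : u₃ ≠ 0 := by rintro rfl; simp [eq_comm, hx₃] at hu₃
    refine ⟨y₁ / u₃, y₂ / u₃, u₃, ?_, ?_, hu₃, by field_simp, by field_simp, ?_⟩
    · rw [div_pow, hu₃, h₁, mul_div_cancel_right₀ _ hx₃]
    · rw [div_pow, hu₃, h₂, mul_div_cancel_right₀ _ hx₃]
    · field_simp
      linear_combination -mul_eq_of_binomials h₁ h₂ h₃ h₄ - y₃ * hu₃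

/-- For `K` algebraically closed and
`φ : K[x₁,x₂,x₃,y₁,y₂,y₃] → K[u₁,u₂,u₃]` with `φ(xᵢ) = uᵢ⁶`, `φ(y₁) = u₁u₃`,
`φ(y₂) = u₂u₃`, `φ(y₃) = u₁⁴u₂⁴u₃²`, the zero set in `K⁶` of `ker φ` equals the set of
common zeros of the four binomials `F₁ = y₁⁶−x₁x₃`, `F₂ = y₂⁶−x₂x₃`,
`F_{3,2} = y₃²−x₁x₂y₁²y₂²`, `F_{3,3} = y₃³−x₁²x₂²x₃`. -/
theorem stmt17 (K : Type*) [Field K] [IsAlgClosed K]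
    (φ : MvPolynomial (Fin 3 ⊕ Fin 3) K →ₐ[K] MvPolynomial (Fin 3) K)
    (hφx1 : φ (X (Sum.inl 0)) = X 0 ^ 6)
    (hφx2 : φ (X (Sum.inl 1)) = X 1 ^ 6)
    (hφx3 : φ (X (Sum.inl 2)) = X 2 ^ 6)
    (hφy1 : φ (X (Sum.inr 0)) = X 0 * X 2)
    (hφy2 : φ (X (Sum.inr 1)) = X 1 * X 2)
    (hφy3 : φ (X (Sum.inr 2)) = X 0 ^ 4 * X 1 ^ 4 * X 2 ^ 2) :
    {a : Fin 3 ⊕ Fin 3 → K | ∀ F ∈ RingHom.ker φ, eval a F = 0} =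
    {a : Fin 3 ⊕ Fin 3 → K |
      eval a (X (Sum.inr 0) ^ 6 - X (Sum.inl 0) * X (Sum.inl 2) :
        MvPolynomial (Fin 3 ⊕ Fin 3) K) = 0 ∧
      eval a (X (Sum.inr 1) ^ 6 - X (Sum.inl 1) * X (Sum.inl 2) :
        MvPolynomial (Fin 3 ⊕ Fin 3) K) = 0 ∧
      eval a (X (Sum.inr 2) ^ 2 -
          X (Sum.inl 0) * X (Sum.inl 1) * X (Sum.inr 0) ^ 2 * X (Sum.inr 1) ^ 2 :
        MvPolynomial (Fin 3 ⊕ Fin 3) K) = 0 ∧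
      eval a (X (Sum.inr 2) ^ 3 - X (Sum.inl 0) ^ 2 * X (Sum.inl 1) ^ 2 * X (Sum.inl 2) :
        MvPolynomial (Fin 3 ⊕ Fin 3) K) = 0} := by
  ext a
  refine ⟨fun h ↦ ⟨h _ ?_, h _ ?_, h _ ?_, h _ ?_⟩, fun ⟨h₁, h₂, h₃, h₄⟩ F hF ↦ ?_⟩
  · simp only [RingHom.mem_ker, map_sub, map_pow, map_mul, hφx1, hφx3, hφy1]; ring
  · simp only [RingHom.mem_ker, map_sub, map_pow, map_mul, hφx2, hφx3, hφy2]; ring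
  · simp only [RingHom.mem_ker, map_sub, map_pow, map_mul, hφx1, hφx2, hφy1, hφy2, hφy3]; ring
  · simp only [RingHom.mem_ker, map_sub, map_pow, map_mul, hφx1, hφx2, hφx3, hφy3]; ring
  simp only [eval_sub, eval_pow, eval_mul, eval_X, sub_eq_zero] at h₁ h₂ h₃ h₄
  obtain ⟨u₁, u₂, u₃, e₁, e₂, e₃, e₄, e₅, e₆⟩ := exists_param_of_binomials h₁ h₂ h₃ h₄
  refine eval_eq_zero_of_mem_ker φ ![u₁, u₂, u₃] ?_ hF
  rintro (i | i) <;> fin_cases i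
  · simp [hφx1, e₁]
  · simp [hφx2, e₂]
  · simp [hφx3, e₃]
  · simp [hφy1, e₄]
  · simp [hφy2, e₅]
  · simp [hφy3, e₆]
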